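/- Let f : ℤ₂ → ℤ₂ be a 1-Lipschitz transitive map and let g : ℤ₂ → ℤ₂ be a derivative of f modulo 4 with parameter K. Then for every z ∈ ℤ₂ one has ∏_{j=0}^{2^K−1} g(f^[j](z)) ≡ 1 (mod 4), i.e. ‖(∏_{j=0}^{2^K−1} g(f^[j](z))) − 1‖ ≤ 2^(−2). -/

import Mathlib

open Function Finset

/-- `a ≡ b (mod 2^s)` in the 2-adic integers. -/
def CongMod (s : ℕ) (a b : ℤ_[2]) : Prop := ‖a - b‖ ≤ ((2 : ℝ) ^ s)⁻¹

/-- `f` is 1-Lipschitz for the 2-adic norm (a T-function). -/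
def OneLip (f : ℤ_[2] → ℤ_[2]) : Prop := ∀ a b : ℤ_[2], ‖f a - f b‖ ≤ ‖a - b‖

/-- `f` is transitive modulo `2^n`. -/
def TransMod (f : ℤ_[2] → ℤ_[2]) (n : ℕ) : Prop :=
  ∀ x y : ℤ_[2], ∃ i < 2 ^ n, CongMod n (f^[i] x) y

/-- `f` is transitive (single cycle modulo every power of 2). -/
def TransitiveT (f : ℤ_[2] → ℤ_[2]) : Prop := ∀ n : ℕ, 1 ≤ n → TransMod f n

/-- `f` is bijective modulo `2^n`. -/
def BijMod (f : ℤ_[2] → ℤ_[2]) (n : ℕ) : Prop :=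
  (∀ a b : ℤ_[2], CongMod n (f a) (f b) → CongMod n a b) ∧
  (∀ y : ℤ_[2], ∃ x : ℤ_[2], CongMod n (f x) y)

/-- `f` is bijective (measure-preserving T-function). -/
def BijectiveT (f : ℤ_[2] → ℤ_[2]) : Prop := ∀ n : ℕ, 1 ≤ n → BijMod f n

/-- `g` is a derivative of `f` modulo `2^M` with parameter `K`. -/
def IsDerivMod (f g : ℤ_[2] → ℤ_[2]) (M K : ℕ) : Prop :=
  ∀ x h : ℤ_[2], ‖h‖ ≤ ((2 : ℝ) ^ K)⁻¹ →
    ‖f (x + h) - f x - g x * h‖ ≤ ((2 : ℝ) ^ M)⁻¹ * ‖h‖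

/-- The `n`-th binary digit of a 2-adic integer, as an element of `ZMod 2`.
`PadicInt.appr x n` is the unique integer in `{0, …, 2^n - 1}` congruent to `x` mod `2^n`. -/
noncomputable def delta (n : ℕ) (x : ℤ_[2]) : ZMod 2 :=
  (((x.appr (n + 1) - x.appr n) / 2 ^ n : ℕ) : ZMod 2)

/-!
Transitivity makes the reduction of `f` modulo `2^n` a single cycle of length `2^n`, so
`f^[m] z ≡ z (mod 2^n)` exactly when `2^n ∣ m`. Put `F = f^[2^K]`, `h = F z - z` and
`k = F (F z) - F z`: then `h ≡ 0 (mod 2^K)`, `k ≢ 0 (mod 2^(K+1))` and `k + h ≢ 0 (mod 2^(K+2))`.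
Iterating the derivative `2^K` times gives `k ≡ P h (mod 2^(K+2))`, where `P` is the product
of the derivatives along the orbit. The first non-congruence forces `P` to be odd, the second
rules out `P ≡ -1 (mod 4)`, hence `P ≡ 1 (mod 4)`.
-/

open PadicInt hiding mul_inv

theorem minimalPeriod_eq_card_of_forall_exists_iterate_eq {α : Type*} [Fintype α]
    {ψ : α → α} (hψ : ∀ x y, ∃ i, ψ^[i] x = y) (x : α) :
    minimalPeriod ψ x = Fintype.card α := by
  have hx : x ∈ periodicPts ψ := by
    obtain ⟨i, hi⟩ := hψ (ψ x) x
    exact ⟨i + 1, i.succ_pos, by rwa [IsPeriodicPt, IsFixedPt, iterate_succ_apply]⟩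
  apply le_antisymm
  · simpa using Fintype.card_le_of_injective (fun k : Fin (minimalPeriod ψ x) => ψ^[k] x)
      fun k l hkl => Fin.ext (iterate_injOn_Iio_minimalPeriod k.2 l.2 hkl)
  · refine (Fintype.card_le_of_surjective (fun k : Fin (minimalPeriod ψ x) => ψ^[k] x)
      fun y => ?_).trans_eq (Fintype.card_fin _)
    obtain ⟨i, rfl⟩ := hψ x y
    exact ⟨⟨i % minimalPeriod ψ x, Nat.mod_lt _ (minimalPeriod_pos_of_mem_periodicPts hx)⟩,
      iterate_mod_minimalPeriod_eq⟩

theorem congMod_iff_toZModPow {n : ℕ} {a b : ℤ_[2]} :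
    CongMod n a b ↔ toZModPow n a = toZModPow n b := by
  rw [CongMod, ← sub_eq_zero, ← map_sub, ← RingHom.mem_ker, ker_toZModPow,
    ← norm_le_pow_iff_mem_span_pow, zpow_neg, zpow_natCast]
  norm_num

theorem toZModPow_natCast_val {n : ℕ} (y : ZMod (2 ^ n)) : toZModPow n (y.val : ℤ_[2]) = y := by
  rw [map_natCast, ZMod.natCast_zmod_val]

theorem congMod_two_one_of_not_zero_of_not_neg_one {x : ℤ_[2]} (hx₀ : ¬ CongMod 1 x 0)
    (hx₁ : ¬ CongMod 2 x (-1)) : CongMod 2 x 1 := by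
  rw [congMod_iff_toZModPow] at *
  rw [← zmod_cast_comp_toZModPow 1 2 (by norm_num)] at hx₀
  simp only [RingHom.comp_apply, map_zero, map_neg, map_one] at *
  generalize toZModPow 2 x = u at *
  revert u
  decide

theorem norm_mul_le_inv_two_pow {a b : ℤ_[2]} {s t : ℕ} (ha : ‖a‖ ≤ ((2 : ℝ) ^ s)⁻¹)
    (hb : ‖b‖ ≤ ((2 : ℝ) ^ t)⁻¹) : ‖a * b‖ ≤ ((2 : ℝ) ^ (s + t))⁻¹ := by
  rw [norm_mul, pow_add, mul_inv]
  exact mul_le_mul ha hb (norm_nonneg _) (by positivity)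

theorem congMod_two_one_of_consecutive_steps {P h k : ℤ_[2]} {K : ℕ}
    (hh : ‖h‖ ≤ ((2 : ℝ) ^ K)⁻¹) (hk : ‖k - P * h‖ ≤ ((2 : ℝ) ^ (K + 2))⁻¹)
    (hk₁ : ¬ ‖k‖ ≤ ((2 : ℝ) ^ (K + 1))⁻¹) (hkh : ¬ ‖k + h‖ ≤ ((2 : ℝ) ^ (K + 2))⁻¹) :
    CongMod 2 P 1 := by
  refine congMod_two_one_of_not_zero_of_not_neg_one (fun hP => hk₁ ?_) (fun hP => hkh ?_)
  · have hPh : ‖P * h‖ ≤ ((2 : ℝ) ^ (K + 1))⁻¹ := by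
      rw [mul_comm]
      exact norm_mul_le_inv_two_pow hh (by simpa [CongMod] using hP)
    calc ‖k‖ = ‖(k - P * h) + P * h‖ := by rw [sub_add_cancel]
      _ ≤ max ‖k - P * h‖ ‖P * h‖ := nonarchimedean _ _
      _ ≤ ((2 : ℝ) ^ (K + 1))⁻¹ := max_le (hk.trans (by gcongr <;> norm_num)) hPh
  · have hPh : ‖(P + 1) * h‖ ≤ ((2 : ℝ) ^ (K + 2))⁻¹ := by
      rw [mul_comm]
      exact norm_mul_le_inv_two_pow hh (by simpa [CongMod] using hP)
    calc ‖k + h‖ = ‖(k - P * h) + (P + 1) * h‖ := by ring_nf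
      _ ≤ max ‖k - P * h‖ ‖(P + 1) * h‖ := nonarchimedean _ _
      _ ≤ ((2 : ℝ) ^ (K + 2))⁻¹ := max_le hk hPh

section TFunction

variable {f g : ℤ_[2] → ℤ_[2]}

noncomputable def residueMap (f : ℤ_[2] → ℤ_[2]) (n : ℕ) : ZMod (2 ^ n) → ZMod (2 ^ n) :=
  fun y => toZModPow n (f (y.val : ℤ_[2]))

theorem OneLip.iterate (hf : OneLip f) (m : ℕ) : OneLip f^[m] := by
  intro a b
  induction m with
  | zero => exact le_rfl
  | succ m ih => simpa only [iterate_succ_apply'] using (hf _ _).trans ih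

theorem OneLip.toZModPow_apply (hf : OneLip f) (n : ℕ) (a : ℤ_[2]) :
    toZModPow n (f a) = residueMap f n (toZModPow n a) := by
  have ha : CongMod n a ((toZModPow n a).val : ℤ_[2]) := by
    rw [congMod_iff_toZModPow, toZModPow_natCast_val]
  exact congMod_iff_toZModPow.mp ((hf _ _).trans ha)

theorem OneLip.toZModPow_iterate (hf : OneLip f) (n m : ℕ) (a : ℤ_[2]) :
    toZModPow n (f^[m] a) = (residueMap f n)^[m] (toZModPow n a) := by
  induction m with
  | zero => rfl
  | succ m ih => rw [iterate_succ_apply', iterate_succ_apply', hf.toZModPow_apply, ih]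

theorem transMod_zero (f : ℤ_[2] → ℤ_[2]) : TransMod f 0 :=
  fun x y => ⟨0, one_pos, by simpa [CongMod] using (x - y).norm_le_one⟩

theorem TransitiveT.transMod (hft : TransitiveT f) (n : ℕ) : TransMod f n :=
  n.eq_zero_or_pos.elim (fun hn => hn ▸ transMod_zero f) (hft n)

theorem TransMod.congMod_iterate_iff {n : ℕ} (hft : TransMod f n) (hf : OneLip f) (x : ℤ_[2])
    (m : ℕ) : CongMod n (f^[m] x) x ↔ 2 ^ n ∣ m := by
  have hψ : ∀ x' y' : ZMod (2 ^ n), ∃ i, (residueMap f n)^[i] x' = y' := fun x' y' => by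
    obtain ⟨i, -, hi⟩ := hft (x'.val : ℤ_[2]) (y'.val : ℤ_[2])
    refine ⟨i, ?_⟩
    rwa [congMod_iff_toZModPow, hf.toZModPow_iterate, toZModPow_natCast_val,
      toZModPow_natCast_val] at hi
  have hperiod : minimalPeriod (residueMap f n) (toZModPow n x) = 2 ^ n := by
    rw [minimalPeriod_eq_card_of_forall_exists_iterate_eq hψ, ZMod.card]
  rw [congMod_iff_toZModPow, hf.toZModPow_iterate]
  change IsPeriodicPt _ m _ ↔ _
  rw [isPeriodicPt_iff_minimalPeriod_dvd, hperiod]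

theorem IsDerivMod.norm_iterate_sub_le {M K : ℕ} (hg : IsDerivMod f g M K) (hf : OneLip f)
    {x h : ℤ_[2]} (hh : ‖h‖ ≤ ((2 : ℝ) ^ K)⁻¹) (m : ℕ) :
    ‖f^[m] (x + h) - f^[m] x - (∏ j ∈ range m, g (f^[j] x)) * h‖ ≤ ((2 : ℝ) ^ M)⁻¹ * ‖h‖ := by
  induction m with
  | zero => simp
  | succ m ih =>
    set y := f^[m] x
    set e := f^[m] (x + h) - y
    have he : ‖e‖ ≤ ‖h‖ := by simpa using hf.iterate m (x + h) x
    have hsplit : f^[m + 1] (x + h) - f^[m + 1] x - (∏ j ∈ range (m + 1), g (f^[j] x)) * h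
        = (f (y + e) - f y - g y * e) + g y * (e - (∏ j ∈ range m, g (f^[j] x)) * h) := by
      rw [prod_range_succ, iterate_succ_apply', iterate_succ_apply',
        ← add_sub_cancel y (f^[m] (x + h))]
      ring
    rw [hsplit]
    refine (nonarchimedean _ _).trans (max_le ?_ ?_)
    · exact (hg y e (he.trans hh)).trans (by gcongr)
    · rw [norm_mul]
      exact (mul_le_of_le_one_left (norm_nonneg _) (norm_le_one _)).trans ih

end TFunction

/-- For a transitive T-function uniformly differentiable modulo 4, the product of the
derivative modulo 4 over a cycle of length `2^K` is 1 modulo 4. -/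
theorem prod_deriv_congr_one (f g : ℤ_[2] → ℤ_[2]) (K : ℕ)
    (hf : OneLip f) (hft : TransitiveT f) (hg : IsDerivMod f g 2 K) (z : ℤ_[2]) :
    ‖(∏ j ∈ Finset.range (2 ^ K), g (f^[j] z)) - 1‖ ≤ ((2 : ℝ) ^ (2 : ℕ))⁻¹ := by
  set F := f^[2 ^ K]
  have hFF : f^[2 ^ (K + 1)] z = F (F z) := by rw [pow_succ, mul_two, iterate_add_apply]
  have hdvd {a b : ℕ} : 2 ^ a ∣ 2 ^ b ↔ a ≤ b := Nat.pow_dvd_pow_iff_le_right one_lt_two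
  have h₀ : CongMod K (F z) z := by
    rw [(hft.transMod K).congMod_iterate_iff hf]
  have h₁ : ¬ CongMod (K + 1) (F (F z)) (F z) := by
    rw [(hft.transMod (K + 1)).congMod_iterate_iff hf, hdvd]; omega
  have h₂ : ¬ CongMod (K + 2) (F (F z)) z := by
    rw [← hFF, (hft.transMod (K + 2)).congMod_iterate_iff hf, hdvd]; omega
  have hchain := hg.norm_iterate_sub_le hf (x := z) h₀ (2 ^ K)
  rw [add_sub_cancel] at hchain
  refine congMod_two_one_of_consecutive_steps h₀ (hchain.trans ?_) h₁
    (by rwa [sub_add_sub_cancel])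
  rw [pow_add, mul_inv_rev]
  exact mul_le_mul_of_nonneg_left h₀ (by norm_num)
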